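/- Let q : [0, ∞) → ℝᵈ be Lipschitz with each component nonnegative, and suppose at every point t where q is differentiable, the drift satisfies Σᵢ wᵢ(q(t)) qᵢ(t) q̇ᵢ(t) ≤ −ε Σᵢ wᵢ(q(t)) qᵢ(t), where each wᵢ(q) ≥ 1. Define L(t) = −∫ₜ^∞ e^{τ−t} Σᵢ wᵢ(q(τ)) qᵢ(τ) q̇ᵢ(τ) dτ (assumed finite). If L(0) < ∞ and ε, δ₁ > 0, then there exists T ≤ L(0)/(ε δ₁) + δ₁ such that Σᵢ qᵢ(T) ≤ δ₁. -/

import Mathlib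

/-!
Since every weight is at least `1`, the drift condition gives `ε ∑ qᵢ ≤ -∑ wᵢ qᵢ q̇ᵢ` at almost
every time, and the factor `e^τ ≥ 1` in `L` only helps, so `ε ∫₀^∞ ∑ qᵢ ≤ L 0`. If `∑ qᵢ > δ₁`
held on all of `[0, B]` with `B = L 0 / (ε δ₁) + δ₁`, the left side would be at least
`ε δ₁ B = L 0 + ε δ₁²`.
-/

open MeasureTheory Set

lemma mul_sum_le_neg_weighted_drift {ι : Type*} [Fintype ι] {x v w : ι → ℝ} {ε : ℝ}
    (hε : 0 ≤ ε) (hx : ∀ i, 0 ≤ x i) (hw : ∀ i, 1 ≤ w i)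
    (hdrift : ∑ i, w i * x i * v i ≤ -ε * ∑ i, w i * x i) :
    ε * ∑ i, x i ≤ -∑ i, w i * x i * v i := by
  have hsum : ∑ i, x i ≤ ∑ i, w i * x i :=
    Finset.sum_le_sum fun i _ => le_mul_of_one_le_left (hx i) (hw i)
  calc ε * ∑ i, x i ≤ ε * ∑ i, w i * x i := mul_le_mul_of_nonneg_left hsum hε
    _ ≤ -∑ i, w i * x i * v i := by linarith

lemma exists_le_of_ae_mul_le_integrableOn_Ioi {S f : ℝ → ℝ} {ε δ : ℝ}
    (hε : 0 < ε) (hδ : 0 < δ) (hf : IntegrableOn f (Ioi 0))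
    (hSf : ∀ᵐ τ ∂volume.restrict (Ioi 0), 0 ≤ S τ ∧ ε * S τ ≤ f τ) :
    ∃ T, 0 ≤ T ∧ T ≤ (∫ τ in Ioi 0, f τ) / (ε * δ) + δ ∧ S T ≤ δ := by
  by_contra! hlarge
  set B := (∫ τ in Ioi 0, f τ) / (ε * δ) + δ
  have hεδ : 0 < ε * δ := mul_pos hε hδ
  have hf_nonneg : ∀ᵐ τ ∂volume.restrict (Ioi 0), 0 ≤ f τ := by
    filter_upwards [hSf] with τ ⟨hS, hSf⟩
    exact (mul_nonneg hε.le hS).trans hSf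
  have hB : 0 ≤ B := by
    have := div_nonneg (integral_nonneg_of_ae hf_nonneg) hεδ.le
    linarith
  have hlower : ∫ _ in Ioc 0 B, ε * δ ≤ ∫ τ in Ioc 0 B, f τ := by
    refine setIntegral_mono_ae_restrict (integrableOn_const measure_Ioc_lt_top.ne)
      (hf.mono_set Ioc_subset_Ioi_self) ?_
    have hSf' := ae_restrict_of_ae_restrict_of_subset (Ioc_subset_Ioi_self : Ioc 0 B ⊆ Ioi 0) hSf
    filter_upwards [hSf', ae_restrict_mem measurableSet_Ioc] with τ hτ hτB
    exact (mul_lt_mul_of_pos_left (hlarge τ hτB.1.le hτB.2) hε).le.trans hτ.2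
  have hupper : ∫ τ in Ioc 0 B, f τ ≤ ∫ τ in Ioi 0, f τ :=
    setIntegral_mono_set hf hf_nonneg Ioc_subset_Ioi_self.eventuallyLE
  have hconst : ∫ _ in Ioc 0 B, ε * δ = ε * δ * B := by
    simp [hB, mul_comm]
  have hεδB : ε * δ * B = (∫ τ in Ioi 0, f τ) + ε * δ * δ := by
    simp only [B]; field_simp
  linarith [mul_pos hεδ hδ]

theorem fluid_draining
    (d : ℕ) (ε δ₁ : ℝ) (hε : 0 < ε) (hδ : 0 < δ₁)
    (q : ℝ → (Fin d → ℝ)) (K : NNReal)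
    (hq_lip : LipschitzWith K q)
    (hq_nonneg : ∀ t ∈ Set.Ici (0:ℝ), ∀ i, 0 ≤ q t i)
    (w : (Fin d → ℝ) → Fin d → ℝ)
    (hw : ∀ x i, 1 ≤ w x i)
    (hdrift : ∀ t ∈ Set.Ici (0:ℝ), DifferentiableAt ℝ q t →
      ∑ i, w (q t) i * q t i * deriv (fun τ => q τ i) t ≤
        -ε * ∑ i, w (q t) i * q t i)
    (L : ℝ → ℝ)
    (hLdef : ∀ t, L t =
      -∫ τ in Set.Ioi t, Real.exp (τ - t) *
        ∑ i, w (q τ) i * q τ i * deriv (fun σ => q σ i) τ)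
    (hLint : ∀ t, IntegrableOn
      (fun τ => Real.exp (τ - t) *
        ∑ i, w (q τ) i * q τ i * deriv (fun σ => q σ i) τ) (Set.Ioi t)) :
    ∃ T : ℝ, 0 ≤ T ∧ T ≤ L 0 / (ε * δ₁) + δ₁ ∧ ∑ i, q T i ≤ δ₁ := by
  set drift : ℝ → ℝ := fun τ => ∑ i, w (q τ) i * q τ i * deriv (fun σ => q σ i) τ
  have hbound : ∀ᵐ τ ∂volume.restrict (Ioi 0),
      0 ≤ ∑ i, q τ i ∧ ε * ∑ i, q τ i ≤ -(Real.exp (τ - 0) * drift τ) := by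
    filter_upwards [ae_restrict_mem measurableSet_Ioi,
      ae_restrict_of_ae hq_lip.ae_differentiableAt] with τ hτ hdiff
    have hτ₀ : τ ∈ Ici 0 := Ioi_subset_Ici_self hτ
    have hq := hq_nonneg τ hτ₀
    have hS : 0 ≤ ∑ i, q τ i := Finset.sum_nonneg fun i _ => hq i
    have hmain : ε * ∑ i, q τ i ≤ -drift τ :=
      mul_sum_le_neg_weighted_drift hε.le hq (hw (q τ)) (hdrift τ hτ₀ hdiff)
    have hexp : 1 ≤ Real.exp (τ - 0) := Real.one_le_exp (by simpa using hτ.le)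
    refine ⟨hS, hmain.trans ?_⟩
    rw [← mul_neg]
    exact le_mul_of_one_le_left ((mul_nonneg hε.le hS).trans hmain) hexp
  have hL0 : L 0 = ∫ τ in Ioi 0, -(Real.exp (τ - 0) * drift τ) := by
    rw [hLdef 0, integral_neg]
  rw [hL0]
  exact exists_le_of_ae_mul_le_integrableOn_Ioi hε hδ (hLint 0).neg hbound
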